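/- arXiv:1806.09153 — 3 statements merged into one kernel-verified Lean document; each statement's English description precedes it below -/
import Mathlib

section
/- Abelian property of sandpiles: for a state φ on a finite domain Ω ⊂ ℤ², any two maximal sequences of legal topplings starting from φ perform the same number of topplings at each vertex and result in the same stable state φ°. -/
/-- The four lattice neighbors of a vertex of `ℤ²`. -/
def neighbors (v : ℤ × ℤ) : Finset (ℤ × ℤ) :=
  {(v.1 + 1, v.2), (v.1 - 1, v.2), (v.1, v.2 + 1), (v.1, v.2 - 1)}

/-- Toppling a state `φ` at a vertex `v` inside the domain `Ω`. -/
def topple (Ω : Finset (ℤ × ℤ)) (φ : ℤ × ℤ → ℕ) (v : ℤ × ℤ) : ℤ × ℤ → ℕ :=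
  fun w => (if w = v then φ w - 4 else φ w) + (if w ∈ neighbors v ∧ w ∈ Ω then 1 else 0)

/-- A list of vertices is a legal toppling sequence from `φ`: each vertex is in
`Ω` and unstable at the moment it is toppled. -/
def Legal (Ω : Finset (ℤ × ℤ)) : (ℤ × ℤ → ℕ) → List (ℤ × ℤ) → Prop
  | _, [] => True
  | φ, v :: l => v ∈ Ω ∧ 4 ≤ φ v ∧ Legal Ω (topple Ω φ v) l

/-- The state obtained by performing a sequence of topplings. -/
def applySeq (Ω : Finset (ℤ × ℤ)) (φ : ℤ × ℤ → ℕ) (l : List (ℤ × ℤ)) : ℤ × ℤ → ℕ :=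
  l.foldl (topple Ω) φ

/-- A state is stable if every vertex of `Ω` carries at most 3 grains. -/
def Stable (Ω : Finset (ℤ × ℤ)) (φ : ℤ × ℤ → ℕ) : Prop := ∀ v ∈ Ω, φ v ≤ 3

/-!
Topplings at two unstable vertices commute, and toppling never lowers the height elsewhere, so an
unstable vertex stays unstable until it is toppled. Hence any stabilizing legal sequence must
topple every currently unstable vertex `v`, and that toppling can be moved to the front. Peeling
off the first toppling of one sequence in this way shows, by induction, that two stabilizing
sequences are permutations of each other and end in the same state.
-/

section Sandpile

variable {Ω : Finset (ℤ × ℤ)}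

theorem le_topple_of_ne (φ : ℤ × ℤ → ℕ) {v w : ℤ × ℤ} (h : w ≠ v) :
    φ w ≤ topple Ω φ v w := by
  simp only [topple, if_neg h]
  omega

/-- Instability keeps the truncated subtraction `φ v - 4` in `topple` exact. -/
theorem topple_comm (φ : ℤ × ℤ → ℕ) {v w : ℤ × ℤ} (hv : 4 ≤ φ v) (hw : 4 ≤ φ w) :
    topple Ω (topple Ω φ v) w = topple Ω (topple Ω φ w) v := by
  funext u
  simp only [topple]
  split_ifs <;> simp_all <;> omega

theorem applySeq_cons (φ : ℤ × ℤ → ℕ) (v : ℤ × ℤ) (l : List (ℤ × ℤ)) :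
    applySeq Ω φ (v :: l) = applySeq Ω (topple Ω φ v) l :=
  rfl

theorem Legal.mem_of_stable {φ : ℤ × ℤ → ℕ} {l : List (ℤ × ℤ)} (hl : Legal Ω φ l)
    (hs : Stable Ω (applySeq Ω φ l)) {v : ℤ × ℤ} (hvΩ : v ∈ Ω) (hv : 4 ≤ φ v) : v ∈ l := by
  induction l generalizing φ with
  | nil => exact absurd (hs v hvΩ) (by simp only [applySeq, List.foldl]; omega)
  | cons w l ih =>
    by_cases hvw : v = w
    · exact hvw ▸ List.mem_cons_self
    · exact List.mem_cons_of_mem _ (ih hl.2.2 hs (hv.trans (le_topple_of_ne φ hvw)))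

theorem Legal.topple_erase {φ : ℤ × ℤ → ℕ} {l : List (ℤ × ℤ)} (hl : Legal Ω φ l)
    {v : ℤ × ℤ} (hv : 4 ≤ φ v) (hmem : v ∈ l) :
    Legal Ω (topple Ω φ v) (l.erase v) ∧
      applySeq Ω φ l = applySeq Ω (topple Ω φ v) (l.erase v) := by
  induction l generalizing φ with
  | nil => cases hmem
  | cons w l ih =>
    by_cases hwv : w = v
    · subst hwv
      rw [List.erase_cons_head]
      exact ⟨hl.2.2, rfl⟩
    obtain ⟨hwΩ, hw, hl⟩ := hl
    have hmem : v ∈ l := (List.mem_cons.1 hmem).resolve_left (Ne.symm hwv)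
    obtain ⟨hleg, happ⟩ := ih hl (hv.trans (le_topple_of_ne φ (Ne.symm hwv))) hmem
    rw [topple_comm φ hw hv] at hleg happ
    rw [List.erase_cons_tail (by simpa using hwv), applySeq_cons, applySeq_cons]
    exact ⟨⟨hwΩ, hw.trans (le_topple_of_ne φ hwv), hleg⟩, happ⟩

theorem Legal.perm_and_applySeq_eq_of_stable {φ : ℤ × ℤ → ℕ} {l₁ l₂ : List (ℤ × ℤ)}
    (h₁ : Legal Ω φ l₁) (h₂ : Legal Ω φ l₂)
    (hs₁ : Stable Ω (applySeq Ω φ l₁)) (hs₂ : Stable Ω (applySeq Ω φ l₂)) :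
    l₁.Perm l₂ ∧ applySeq Ω φ l₁ = applySeq Ω φ l₂ := by
  induction l₁ generalizing φ l₂ with
  | nil =>
    cases l₂ with
    | nil => exact ⟨List.Perm.refl _, rfl⟩
    | cons w l₂ => cases h₁.mem_of_stable hs₁ h₂.1 h₂.2.1
  | cons v l₁ ih =>
    have hvl₂ : v ∈ l₂ := h₂.mem_of_stable hs₂ h₁.1 h₁.2.1
    obtain ⟨hleg, happ⟩ := h₂.topple_erase h₁.2.1 hvl₂
    obtain ⟨hperm, hstate⟩ := ih h₁.2.2 hleg hs₁ (happ ▸ hs₂)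
    exact ⟨(hperm.cons v).trans (List.perm_cons_erase hvl₂).symm, hstate.trans happ.symm⟩

end Sandpile

/-- Abelian property of the sandpile model: any two maximal (i.e. ending in a
stable state) legal toppling sequences from the same state `φ` topple each
vertex the same number of times and produce the same stable state. -/
theorem abelian_property (Ω : Finset (ℤ × ℤ)) (φ : ℤ × ℤ → ℕ) (l₁ l₂ : List (ℤ × ℤ))
    (h₁ : Legal Ω φ l₁) (h₂ : Legal Ω φ l₂)
    (hs₁ : Stable Ω (applySeq Ω φ l₁)) (hs₂ : Stable Ω (applySeq Ω φ l₂)) :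
    (∀ v : ℤ × ℤ, l₁.count v = l₂.count v) ∧ applySeq Ω φ l₁ = applySeq Ω φ l₂ := by
  obtain ⟨hperm, hstate⟩ := h₁.perm_and_applySeq_eq_of_stable h₂ hs₁ hs₂
  exact ⟨fun v => hperm.count_eq v, hstate⟩
end

section
/- Least Action Principle: let φ be a state on a finite domain Ω ⊂ ℤ² with toppling function H of its relaxation. If F : Ω → ℤ≥0 is any function (extended by 0 outside Ω) such that φ + ΔF ≤ 3 pointwise, then F(v) ≥ H(v) for all v ∈ Ω. -/
lemma mem_neighbors_comm {v w : ℤ × ℤ} : w ∈ neighbors v ↔ v ∈ neighbors w := by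
  simp only [neighbors, Finset.mem_insert, Finset.mem_singleton, Prod.ext_iff]
  omega

lemma self_notMem_neighbors (v : ℤ × ℤ) : v ∉ neighbors v := by
  simp only [neighbors, Finset.mem_insert, Finset.mem_singleton, Prod.ext_iff]
  omega

def dirichletLaplacian (Ω : Finset (ℤ × ℤ)) (F : ℤ × ℤ → ℤ) (v : ℤ × ℤ) : ℤ :=
  (∑ w ∈ neighbors v ∩ Ω, F w) - 4 * F v

def Stabilizes (Ω : Finset (ℤ × ℤ)) (φ : ℤ × ℤ → ℕ) (F : ℤ × ℤ → ℤ) : Prop :=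
  ∀ v ∈ Ω, (φ v : ℤ) + dirichletLaplacian Ω F v ≤ 3

section

variable {Ω : Finset (ℤ × ℤ)}

lemma dirichletLaplacian_sub (F G : ℤ × ℤ → ℤ) (v : ℤ × ℤ) :
    dirichletLaplacian Ω (F - G) v = dirichletLaplacian Ω F v - dirichletLaplacian Ω G v := by
  simp only [dirichletLaplacian, Pi.sub_apply, Finset.sum_sub_distrib]
  ring

lemma topple_eq_add_dirichletLaplacian_single {φ : ℤ × ℤ → ℕ} {v w : ℤ × ℤ}
    (hv : v ∈ Ω) (hφv : 4 ≤ φ v) (hw : w ∈ Ω) :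
    (topple Ω φ v w : ℤ) = φ w + dirichletLaplacian Ω (Pi.single v 1) w := by
  have hvw : v ∈ neighbors w ∩ Ω ↔ w ∈ neighbors v := by
    rw [Finset.mem_inter, mem_neighbors_comm]; exact and_iff_left hv
  rw [dirichletLaplacian, Finset.sum_pi_single']
  simp only [topple, hvw, hw, and_true, Pi.single_apply]
  by_cases hwv : w = v
  · subst hwv
    simp [self_notMem_neighbors, Nat.cast_sub hφv, sub_eq_add_neg]
  · simp [hwv]

lemma Stabilizes.one_le {φ : ℤ × ℤ → ℕ} {F : ℤ × ℤ → ℤ} (hF : Stabilizes Ω φ F)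
    (hF_nonneg : ∀ w ∈ Ω, 0 ≤ F w) {v : ℤ × ℤ} (hv : v ∈ Ω) (hφv : 4 ≤ φ v) : 1 ≤ F v := by
  have hsum : 0 ≤ ∑ w ∈ neighbors v ∩ Ω, F w :=
    Finset.sum_nonneg fun w hw => hF_nonneg w (Finset.mem_inter.mp hw).2
  have := hF v hv
  simp only [dirichletLaplacian] at this
  omega

lemma Stabilizes.topple {φ : ℤ × ℤ → ℕ} {F : ℤ × ℤ → ℤ} (hF : Stabilizes Ω φ F)
    {v : ℤ × ℤ} (hv : v ∈ Ω) (hφv : 4 ≤ φ v) :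
    Stabilizes Ω (topple Ω φ v) (F - Pi.single v 1) := by
  intro w hw
  rw [topple_eq_add_dirichletLaplacian_single hv hφv hw, dirichletLaplacian_sub]
  linarith [hF w hw]

theorem Legal.count_le_of_stabilizes {φ : ℤ × ℤ → ℕ} {l : List (ℤ × ℤ)} (hl : Legal Ω φ l)
    {F : ℤ × ℤ → ℤ} (hF : Stabilizes Ω φ F) (hF_nonneg : ∀ w ∈ Ω, 0 ≤ F w) :
    ∀ w ∈ Ω, (l.count w : ℤ) ≤ F w := by
  induction l generalizing φ F with
  | nil => simpa using hF_nonneg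
  | cons v l ih =>
    obtain ⟨hv, hφv, hl⟩ := hl
    have hFv : 1 ≤ F v := hF.one_le hF_nonneg hv hφv
    have hF'_nonneg : ∀ w ∈ Ω, 0 ≤ (F - Pi.single v 1 : ℤ × ℤ → ℤ) w := by
      intro w hw
      by_cases hwv : w = v
      · simp [hwv, hFv]
      · simp [hwv, hF_nonneg w hw]
    intro w hw
    have hcount : (l.count w : ℤ) ≤ (F - Pi.single v 1 : ℤ × ℤ → ℤ) w :=
      ih hl (hF.topple hv hφv) hF'_nonneg w hw
    by_cases hwv : w = v
    · simp only [hwv, Pi.sub_apply, List.count_cons_self, Pi.single_eq_same] at hcount ⊢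
      push_cast; omega
    · simpa [hwv, List.count_cons, Ne.symm hwv] using hcount

end

theorem least_action_principle_general (Ω : Finset (ℤ × ℤ)) (φ : ℤ × ℤ → ℕ)
    (l : List (ℤ × ℤ)) (hl : Legal Ω φ l)
    (F : ℤ × ℤ → ℕ)
    (hFstab : ∀ v ∈ Ω,
      (φ v : ℤ) + ((∑ w ∈ neighbors v ∩ Ω, (F w : ℤ)) - 4 * (F v : ℤ)) ≤ 3) :
    ∀ v ∈ Ω, l.count v ≤ F v := fun v hv => by
  exact_mod_cast hl.count_le_of_stabilizes (F := fun w => (F w : ℤ)) hFstab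
    (fun w _ => Nat.cast_nonneg _) v hv

/-- Least Action Principle: if `H` is the toppling function of a relaxation of
`φ` (a maximal legal toppling sequence), and `F : ℤ² → ℕ` vanishes outside `Ω`
and satisfies `φ + ΔF ≤ 3` pointwise on `Ω` (Dirichlet Laplacian), then
`H ≤ F` on `Ω`. -/
theorem least_action_principle (Ω : Finset (ℤ × ℤ)) (φ : ℤ × ℤ → ℕ)
    (l : List (ℤ × ℤ)) (hl : Legal Ω φ l) (hs : Stable Ω (applySeq Ω φ l))
    (F : ℤ × ℤ → ℕ) (hF0 : ∀ v, v ∉ Ω → F v = 0)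
    (hFstab : ∀ v ∈ Ω,
      (φ v : ℤ) + ((∑ w ∈ neighbors v ∩ Ω, (F w : ℤ)) - 4 * (F v : ℤ)) ≤ 3) :
    ∀ v ∈ Ω, l.count v ≤ F v :=
  least_action_principle_general Ω φ l hl F hFstab
end

section
/- Let F : Ω → ℝ be piecewise linear with integral slopes, concave, nonnegative on a convex domain Ω, zero on ∂Ω, and with Laplacian (in the distributional/discrete sense) satisfying ΔF ≤ 0 with ΔF(p) < 0 at each point p of a finite set P. If H is the minimal such function (pointwise minimum over the family 𝓕_P), then H is itself a member of 𝓕_P, i.e., the family 𝓕_P is closed under pointwise minima of pairs: if F₁, F₂ ∈ 𝓕_P then min(F₁, F₂) ∈ 𝓕_P. -/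
/-- Membership in the family `𝓕_P` of functions on a domain `Ω ⊆ ℝ²`:
`F` is (1) piecewise linear with integral slopes and (3) concave — for concave
functions these two conditions together are equivalent to being, on `Ω`, a
finite minimum of affine functions with integer slopes — (2) nonnegative on
`Ω` and zero on the boundary of `Ω`, and (4) not smooth at every point of the
finite prescribed set `P` (`ΔF < 0` at each `p ∈ P`, i.e. a genuine corner). -/
def MemF (Ω P : Set (ℝ × ℝ)) (F : ℝ × ℝ → ℝ) : Prop :=
  (∃ (S : Finset (ℤ × ℤ × ℝ)) (hS : S.Nonempty), ∀ p ∈ Ω,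
      F p = S.inf' hS fun t => t.2.2 + (t.1 : ℝ) * p.1 + (t.2.1 : ℝ) * p.2) ∧
  (∀ p ∈ Ω, 0 ≤ F p) ∧
  (∀ p ∈ frontier Ω, F p = 0) ∧
  ConcaveOn ℝ Ω F ∧
  (∀ p ∈ P, ¬ DifferentiableAt ℝ F p)

/-!
Near `p ∈ P`, `min F₁ F₂` lies below the `Fᵢ` with the smaller value at `p` and touches it there.
Since `Fᵢ` is a finite minimum of affine functions and is not differentiable at `p`, two of the
affine pieces active at `p` have different gradients. A function touching both pieces from below
at `p` would, if differentiable, have the gradient of each of them, which is impossible.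
The remaining conditions pass to the minimum directly; its affine pieces are those of `F₁` and
`F₂` together.
-/

open Filter Topology

section TouchingFromBelow

variable {E : Type*} [NormedAddCommGroup E] [NormedSpace ℝ E] {F G : E → ℝ} {p : E}

theorem HasFDerivAt.eq_of_eventuallyLE_of_eq {f : E → ℝ} {G' f' : E →L[ℝ] ℝ}
    (hG : HasFDerivAt G G' p) (hf : HasFDerivAt f f' p) (hle : G ≤ᶠ[𝓝 p] f) (heq : G p = f p) :
    G' = f' := by
  have hmin : IsLocalMin (f - G) p := by
    filter_upwards [hle] with x hx
    simp only [Pi.sub_apply, heq, sub_self, sub_nonneg]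
    exact hx
  exact (sub_eq_zero.1 (hmin.hasFDerivAt_eq_zero (hf.sub hG))).symm

variable {ι : Type*} {S : Finset ι} (hS : S.Nonempty) (c : ι → ℝ) (L : ι → E →L[ℝ] ℝ)
include hS

theorem exists_active_ne_of_not_differentiableAt_inf'
    (hF : ∀ᶠ x in 𝓝 p, F x = S.inf' hS fun i => c i + L i x) (hnd : ¬ DifferentiableAt ℝ F p) :
    ∃ i ∈ S, ∃ j ∈ S, c i + L i p = F p ∧ c j + L j p = F p ∧ L i ≠ L j := by
  by_contra! hsame
  obtain ⟨i₀, hi₀, hmin⟩ := S.exists_mem_eq_inf' hS fun i => c i + L i p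
  have hFp : F p = c i₀ + L i₀ p := hF.self_of_nhds.trans hmin
  have hbelow : ∀ i ∈ S, ∀ᶠ x in 𝓝 p, c i₀ + L i₀ x ≤ c i + L i x := by
    intro i hi
    have hle : c i₀ + L i₀ p ≤ c i + L i p := hmin ▸ S.inf'_le (fun i => c i + L i p) hi
    rcases hle.eq_or_lt with hactive | hinactive
    · have hL : L i = L i₀ := hsame i hi i₀ hi₀ (hactive ▸ hFp.symm) hFp.symm
      refine Eventually.of_forall fun x => ?_
      rw [hL] at hactive ⊢
      linarith
    · have hcont : ∀ k, Continuous fun x => c k + L k x := fun k => by fun_prop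
      exact ((hcont i₀).continuousAt.eventually_lt (hcont i).continuousAt hinactive).mono
        fun _ => le_of_lt
  have hFaff : F =ᶠ[𝓝 p] fun x => c i₀ + L i₀ x := by
    filter_upwards [hF, (eventually_all_finset S).2 hbelow] with x hx hall
    exact hx.trans (le_antisymm (S.inf'_le _ hi₀) (S.le_inf' _ _ hall))
  exact hnd (hFaff.differentiableAt_iff.2 ((L i₀).differentiableAt.const_add _))

theorem not_differentiableAt_of_le_inf'
    (hF : ∀ᶠ x in 𝓝 p, F x = S.inf' hS fun i => c i + L i x) (hnd : ¬ DifferentiableAt ℝ F p)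
    (hle : G ≤ᶠ[𝓝 p] F) (heq : G p = F p) : ¬ DifferentiableAt ℝ G p := by
  obtain ⟨i, hi, j, hj, hip, hjp, hne⟩ :=
    exists_active_ne_of_not_differentiableAt_inf' hS c L hF hnd
  intro hG
  have hgrad : ∀ k ∈ S, c k + L k p = F p → fderiv ℝ G p = L k := fun k hk hkp =>
    hG.hasFDerivAt.eq_of_eventuallyLE_of_eq ((L k).hasFDerivAt.const_add (c k))
      (hle.trans (hF.mono fun x hx => hx.trans_le (S.inf'_le _ hk))) (heq.trans hkp.symm)
  exact hne ((hgrad i hi hip).symm.trans (hgrad j hj hjp))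

end TouchingFromBelow

/-- The linear part `(x, y) ↦ a x + b y` of the affine piece `c + a x + b y` encoded by
`t = (a, b, c)` in `MemF`. -/
noncomputable def slopeCLM (t : ℤ × ℤ × ℝ) : ℝ × ℝ →L[ℝ] ℝ :=
  (t.1 : ℝ) • ContinuousLinearMap.fst ℝ ℝ ℝ + (t.2.1 : ℝ) • ContinuousLinearMap.snd ℝ ℝ ℝ

theorem MemF.not_differentiableAt_of_le {Ω P : Set (ℝ × ℝ)} {F G : ℝ × ℝ → ℝ} {p : ℝ × ℝ}
    (hF : MemF Ω P F) (hp : p ∈ P) (hpΩ : p ∈ interior Ω) (hle : G ≤ F) (heq : G p = F p) :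
    ¬ DifferentiableAt ℝ G p := by
  obtain ⟨⟨S, hS, hrep⟩, -, -, -, hnd⟩ := hF
  have hloc : ∀ᶠ x in 𝓝 p, F x = S.inf' hS fun t => t.2.2 + slopeCLM t x := by
    filter_upwards [isOpen_interior.mem_nhds hpΩ] with x hx
    simp [hrep x (interior_subset hx), slopeCLM, add_assoc]
  exact not_differentiableAt_of_le_inf' hS _ _ hloc (hnd p hp) (Eventually.of_forall hle) heq

theorem memF_min_general (Ω : Set (ℝ × ℝ)) (P : Set (ℝ × ℝ)) (hP : P ⊆ interior Ω)
    (F₁ F₂ : ℝ × ℝ → ℝ) (h₁ : MemF Ω P F₁) (h₂ : MemF Ω P F₂) :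
    MemF Ω P (fun p => min (F₁ p) (F₂ p)) := by
  have hcorner : ∀ p ∈ P, ¬ DifferentiableAt ℝ (fun p => min (F₁ p) (F₂ p)) p := by
    intro p hp
    rcases le_total (F₁ p) (F₂ p) with h | h
    · exact h₁.not_differentiableAt_of_le hp (hP hp) (fun x => min_le_left _ _) (min_eq_left h)
    · exact h₂.not_differentiableAt_of_le hp (hP hp) (fun x => min_le_right _ _) (min_eq_right h)
  obtain ⟨⟨S₁, hS₁, hrep₁⟩, hnn₁, hbd₁, hcc₁, -⟩ := h₁
  obtain ⟨⟨S₂, hS₂, hrep₂⟩, hnn₂, hbd₂, hcc₂, -⟩ := h₂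
  refine ⟨⟨S₁ ∪ S₂, hS₁.mono Finset.subset_union_left, fun p hp => ?_⟩,
    fun p hp => le_min (hnn₁ p hp) (hnn₂ p hp), fun p hp => by simp [hbd₁ p hp, hbd₂ p hp],
    hcc₁.inf hcc₂, hcorner⟩
  rw [Finset.inf'_union hS₁ hS₂, ← hrep₁ p hp, ← hrep₂ p hp]

/-- The family `𝓕_P` is closed under pointwise minima of pairs: if
`F₁, F₂ ∈ 𝓕_P` then `min (F₁, F₂) ∈ 𝓕_P`.  (Nonsmoothness at `p ∈ P` is
preserved: near `p` the minimum agrees with one of the two functions or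
acquires a new corner.)  Hence the pointwise minimum defining `F_P = min 𝓕_P`
stays in the family. -/
theorem memF_min (Ω : Set (ℝ × ℝ)) (hΩ : Convex ℝ Ω) (P : Set (ℝ × ℝ))
    (hPfin : P.Finite) (hP : P ⊆ interior Ω)
    (F₁ F₂ : ℝ × ℝ → ℝ) (h₁ : MemF Ω P F₁) (h₂ : MemF Ω P F₂) :
    MemF Ω P (fun p => min (F₁ p) (F₂ p)) :=
  memF_min_general Ω P hP F₁ F₂ h₁ h₂
end
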